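/- Let F : ℝᵐ → ℝᵐ be three times continuously differentiable on a neighborhood of a point x* with F(x*) = 0 and the Jacobian J(x*) invertible. Then there exist δ > 0 and a constant C ≥ 0 such that for every starting point x₀ with ‖x₀ − x*‖ < δ, the vector Weerakoon–Fernando iteration, defined by x^λ_{n+1} = x_n − [J(x_n)]⁻¹ F(x_n) followed by x_{n+1} = x_n − 2 [J(x_n) + J(x^λ_{n+1})]⁻¹ F(x_n), is well defined (the relevant Jacobian matrices and their sum are invertible at each step), the sequence (x_n) converges to x*, and ‖x_{n+1} − x*‖ ≤ C ‖x_n − x*‖³ for all n. -/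

import Mathlib

/-!
Write `e = z - x*` and `y` for the Newton point of `z`. Newton's method is quadratic,
`‖y - x*‖ = O(‖e‖²)`. The WFM error is `(J z + J y)⁻¹ ((J y - J x*) e - 2 T)`, where
`T = F z - F x* - ½ (J x* + J z) e` is the error of the trapezoidal rule for `∫ J` along
`[x*, z]`. The first term is `O(‖y - x*‖ ‖e‖) = O(‖e‖³)`, and the trapezoidal rule is exact to
second order by the symmetry of `D²F`, so `T = O(‖e‖³)` as well. Near `x*` the cubic bound
makes the step a contraction, which gives convergence.
-/

open Filter Metric
open scoped NNReal Topology

section Taylor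

variable {E G : Type*} [NormedAddCommGroup E] [NormedSpace ℝ E] [NormedAddCommGroup G]
  [NormedSpace ℝ G] {f : E → G} {f' : E → E →L[ℝ] G} {t : Set E} {K : ℝ≥0} {a b : E}

theorem Convex.norm_sub_sub_apply_le_of_lipschitzOnWith (ht : Convex ℝ t)
    (hf : ∀ w ∈ t, HasFDerivAt f (f' w) w) (hlip : LipschitzOnWith K f' t)
    (ha : a ∈ t) (hb : b ∈ t) :
    ‖f b - f a - f' a (b - a)‖ ≤ K * ‖b - a‖ ^ 2 := by
  have hseg := ht.segment_subset ha hb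
  have hbound : ∀ w ∈ segment ℝ a b, ‖f' w - f' a‖ ≤ K * ‖b - a‖ := fun w hw =>
    calc ‖f' w - f' a‖ ≤ K * ‖w - a‖ := hlip.norm_sub_le (hseg hw) ha
      _ ≤ K * ‖b - a‖ := by gcongr; exact norm_sub_le_of_mem_segment hw
  calc ‖f b - f a - f' a (b - a)‖ ≤ K * ‖b - a‖ * ‖b - a‖ :=
        (convex_segment a b).norm_image_sub_le_of_norm_hasFDerivWithin_le'
          (fun w hw => (hf w (hseg hw)).hasFDerivWithinAt) hbound
          (left_mem_segment ℝ a b) (right_mem_segment ℝ a b)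
    _ = K * ‖b - a‖ ^ 2 := by ring

theorem Convex.norm_sub_sub_trapezoid_le {f'' : E → E →L[ℝ] E →L[ℝ] G} (ht : Convex ℝ t)
    (hf : ∀ w ∈ t, HasFDerivAt f (f' w) w) (hf' : ∀ w ∈ t, HasFDerivAt f' (f'' w) w)
    (hsymm : ∀ w ∈ t, ∀ u v, f'' w u v = f'' w v u) (hlip : LipschitzOnWith K f'' t)
    (ha : a ∈ t) (hb : b ∈ t) :
    ‖f b - f a - (2⁻¹ : ℝ) • (f' a + f' b) (b - a)‖ ≤ K / 2 * ‖b - a‖ ^ 3 := by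
  have hseg := ht.segment_subset ha hb
  set φ : E → G := fun w => f w - f a - (2⁻¹ : ℝ) • (f' a + f' w) (w - a)
  set φ' : E → E →L[ℝ] G := fun w => (2⁻¹ : ℝ) • (f' w - f' a - f'' w (w - a))
  -- `φ'` is the derivative of `φ` only up to the symmetry `f'' w v (w - a) = f'' w (w - a) v`.
  have hφ : ∀ w ∈ t, HasFDerivAt φ (φ' w) w := by
    intro w hw
    have hlin := ((hasFDerivAt_const (f' a) w).add (hf' w hw)).clm_apply
      ((hasFDerivAt_id w).sub_const a)
    convert ((hf w hw).sub_const (f a)).sub (hlin.const_smul (2⁻¹ : ℝ)) using 1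
    · rfl
    · ext v
      simp only [φ', smul_apply, sub_apply, add_apply, ContinuousLinearMap.comp_apply,
        ContinuousLinearMap.flip_apply, ContinuousLinearMap.id_apply, Pi.add_apply, zero_add,
        id, hsymm w hw (w - a) v]
      module
  have hbound : ∀ w ∈ segment ℝ a b, ‖φ' w‖ ≤ K / 2 * ‖b - a‖ ^ 2 := by
    intro w hw
    have htaylor := ht.norm_sub_sub_apply_le_of_lipschitzOnWith hf' hlip (hseg hw) ha
    have hrev : f' w - f' a - f'' w (w - a) = -(f' a - f' w - f'' w (a - w)) := by
      rw [← neg_sub w a, map_neg]; abel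
    calc ‖φ' w‖ = 2⁻¹ * ‖f' a - f' w - f'' w (a - w)‖ := by
          rw [norm_smul, hrev, norm_neg, Real.norm_of_nonneg (by norm_num)]
      _ ≤ 2⁻¹ * (K * ‖a - w‖ ^ 2) := by gcongr
      _ ≤ 2⁻¹ * (K * ‖b - a‖ ^ 2) := by
          gcongr; rw [norm_sub_rev]; exact norm_sub_le_of_mem_segment hw
      _ = K / 2 * ‖b - a‖ ^ 2 := by ring
  have hmvt := (convex_segment a b).norm_image_sub_le_of_norm_hasFDerivWithin_le
    (fun w hw => (hφ w (hseg hw)).hasFDerivWithinAt) hbound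
    (left_mem_segment ℝ a b) (right_mem_segment ℝ a b)
  calc ‖f b - f a - (2⁻¹ : ℝ) • (f' a + f' b) (b - a)‖ = ‖φ b - φ a‖ := by simp [φ]
    _ ≤ K / 2 * ‖b - a‖ ^ 2 * ‖b - a‖ := hmvt
    _ = K / 2 * ‖b - a‖ ^ 3 := by ring

end Taylor

theorem IsUnit.eventually_isUnit_and_norm_inverse_lt {R : Type*} [NormedRing R] [CompleteSpace R]
    [HasSummableGeomSeries R] {a : R} (ha : IsUnit a) :
    ∀ᶠ b in 𝓝 a, IsUnit b ∧ ‖Ring.inverse b‖ < ‖Ring.inverse a‖ + 1 :=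
  Filter.Eventually.and ha.unit.nhds
    ((NormedRing.inverse_continuousAt ha.unit).norm.eventually_lt continuousAt_const (lt_add_one _))

theorem ContinuousLinearMap.ringInverse_apply_self {E : Type*} [NormedAddCommGroup E]
    [NormedSpace ℝ E] {A : E →L[ℝ] E} (hA : IsUnit A) (v : E) : Ring.inverse A (A v) = v := by
  rw [← mul_apply_eq_comp, Ring.inverse_mul_cancel A hA, one_apply_eq_self]

theorem eventually_mul_norm_sub_pow_le {E : Type*} [SeminormedAddCommGroup E] (x : E) (c : ℝ)
    {ε : ℝ} (hε : 0 < ε) {n : ℕ} (hn : n ≠ 0) : ∀ᶠ z in 𝓝 x, c * ‖z - x‖ ^ n ≤ ε := by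
  have hcont : Continuous fun z => c * ‖z - x‖ ^ n := by fun_prop
  exact (hcont.tendsto' x 0 (by simp [hn])).eventually (ge_mem_nhds hε)

section Iteration

variable {E : Type*} [SeminormedAddCommGroup E] {g : E → E} {a : E} {δ q : ℝ} {x : ℕ → E}

theorem norm_sub_lt_of_contracting (hq : q ≤ 1)
    (hg : ∀ z, ‖z - a‖ < δ → ‖g z - a‖ ≤ q * ‖z - a‖) (hx : ∀ n, x (n + 1) = g (x n))
    (h0 : ‖x 0 - a‖ < δ) : ∀ n, ‖x n - a‖ < δ
  | 0 => h0
  | n + 1 => by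
    have ih := norm_sub_lt_of_contracting hq hg hx h0 n
    rw [hx]
    exact ((hg _ ih).trans (mul_le_of_le_one_left (norm_nonneg _) hq)).trans_lt ih

theorem tendsto_of_contracting (hq₀ : 0 ≤ q) (hq₁ : q < 1)
    (hg : ∀ z, ‖z - a‖ < δ → ‖g z - a‖ ≤ q * ‖z - a‖) (hx : ∀ n, x (n + 1) = g (x n))
    (h0 : ‖x 0 - a‖ < δ) : Tendsto x atTop (𝓝 a) := by
  have hgeom : ∀ n, ‖x n - a‖ ≤ q ^ n * ‖x 0 - a‖ := fun n =>
    le_geom (u := fun n => ‖x n - a‖) hq₀ n fun k _ =>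
      hx k ▸ hg _ (norm_sub_lt_of_contracting hq₁.le hg hx h0 k)
  rw [tendsto_iff_norm_sub_tendsto_zero]
  refine squeeze_zero (fun _ => norm_nonneg _) hgeom ?_
  simpa using (tendsto_pow_atTop_nhds_zero_of_lt_one hq₀ hq₁).mul_const ‖x 0 - a‖

end Iteration

section WeerakoonFernando

variable {E : Type*} [NormedAddCommGroup E] [NormedSpace ℝ E] {F : E → E} {xstar z : E}
  {r M₁ M₂ : ℝ} {K₁ K₂ : ℝ≥0}

noncomputable def newtonStep (F : E → E) (z : E) : E :=
  z - Ring.inverse (fderiv ℝ F z) (F z)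

noncomputable def wfmStep (F : E → E) (z : E) : E :=
  z - (2 : ℝ) • Ring.inverse (fderiv ℝ F z + fderiv ℝ F (newtonStep F z)) (F z)

theorem newtonStep_sub_eq (hroot : F xstar = 0) (hz : IsUnit (fderiv ℝ F z)) :
    newtonStep F z - xstar =
      Ring.inverse (fderiv ℝ F z) (F xstar - F z - fderiv ℝ F z (xstar - z)) := by
  rw [map_sub, map_sub, ContinuousLinearMap.ringInverse_apply_self hz, hroot, map_zero,
    newtonStep]
  abel

theorem wfmStep_sub_eq (hroot : F xstar = 0)
    (hA : IsUnit (fderiv ℝ F z + fderiv ℝ F (newtonStep F z))) :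
    wfmStep F z - xstar =
      Ring.inverse (fderiv ℝ F z + fderiv ℝ F (newtonStep F z))
        ((fderiv ℝ F (newtonStep F z) - fderiv ℝ F xstar) (z - xstar) -
          (2 : ℝ) • (F z - F xstar -
            (2⁻¹ : ℝ) • (fderiv ℝ F xstar + fderiv ℝ F z) (z - xstar))) := by
  set A := fderiv ℝ F z + fderiv ℝ F (newtonStep F z)
  have hsplit : (fderiv ℝ F (newtonStep F z) - fderiv ℝ F xstar) (z - xstar) -
      (2 : ℝ) • (F z - F xstar - (2⁻¹ : ℝ) • (fderiv ℝ F xstar + fderiv ℝ F z) (z - xstar)) =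
      A (z - xstar) - (2 : ℝ) • F z := by
    simp only [A, hroot, sub_apply, add_apply]
    module
  rw [hsplit, map_sub, ContinuousLinearMap.ringInverse_apply_self hA, map_smul, wfmStep]
  abel

theorem norm_newtonStep_sub_le (hroot : F xstar = 0)
    (hF : ∀ w ∈ closedBall xstar r, DifferentiableAt ℝ F w)
    (hK₁ : LipschitzOnWith K₁ (fderiv ℝ F) (closedBall xstar r)) (hz : z ∈ closedBall xstar r)
    (hJz : IsUnit (fderiv ℝ F z)) :
    ‖newtonStep F z - xstar‖ ≤ ‖Ring.inverse (fderiv ℝ F z)‖ * (K₁ * ‖z - xstar‖ ^ 2) := by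
  have hx : xstar ∈ closedBall xstar r := mem_closedBall_self (dist_nonneg.trans hz)
  have htaylor := (convex_closedBall xstar r).norm_sub_sub_apply_le_of_lipschitzOnWith
    (fun w hw => (hF w hw).hasFDerivAt) hK₁ hz hx
  rw [norm_sub_rev xstar z] at htaylor
  rw [newtonStep_sub_eq hroot hJz]
  exact (ContinuousLinearMap.le_opNorm _ _).trans
    (mul_le_mul_of_nonneg_left htaylor (norm_nonneg _))

theorem norm_wfmStep_sub_le (hroot : F xstar = 0)
    (hF : ∀ w ∈ closedBall xstar r, ContDiffAt ℝ 2 F w)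
    (hK₁ : LipschitzOnWith K₁ (fderiv ℝ F) (closedBall xstar r))
    (hK₂ : LipschitzOnWith K₂ (fderiv ℝ (fderiv ℝ F)) (closedBall xstar r))
    (hz : z ∈ closedBall xstar r) (hy : newtonStep F z ∈ closedBall xstar r)
    (hA : IsUnit (fderiv ℝ F z + fderiv ℝ F (newtonStep F z))) :
    ‖wfmStep F z - xstar‖ ≤ ‖Ring.inverse (fderiv ℝ F z + fderiv ℝ F (newtonStep F z))‖ *
      (K₁ * ‖newtonStep F z - xstar‖ * ‖z - xstar‖ + K₂ * ‖z - xstar‖ ^ 3) := by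
  have hx : xstar ∈ closedBall xstar r := mem_closedBall_self (dist_nonneg.trans hz)
  have hJ := mul_le_mul_of_nonneg_right (hK₁.norm_sub_le hy hx) (norm_nonneg (z - xstar))
  have htrap := (convex_closedBall xstar r).norm_sub_sub_trapezoid_le
    (fun w hw => ((hF w hw).differentiableAt (by norm_num)).hasFDerivAt)
    (fun w hw => (((hF w hw).fderiv_right le_rfl).differentiableAt one_ne_zero).hasFDerivAt)
    (fun w hw => (hF w hw).isSymmSndFDerivAt (by simp)) hK₂ hx hz
  rw [wfmStep_sub_eq hroot hA]
  refine (ContinuousLinearMap.le_opNorm _ _).trans (mul_le_mul_of_nonneg_left ?_ (norm_nonneg _))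
  calc _ ≤ ‖fderiv ℝ F (newtonStep F z) - fderiv ℝ F xstar‖ * ‖z - xstar‖ +
        2 * (K₂ / 2 * ‖z - xstar‖ ^ 3) := by
        refine (norm_sub_le _ _).trans (add_le_add (ContinuousLinearMap.le_opNorm _ _) ?_)
        rw [norm_smul, Real.norm_two]
        gcongr
    _ ≤ _ := by linarith

theorem wfmStep_cubic_of_closedBall (hroot : F xstar = 0)
    (hF : ∀ w ∈ closedBall xstar r, ContDiffAt ℝ 2 F w)
    (hK₁ : LipschitzOnWith K₁ (fderiv ℝ F) (closedBall xstar r))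
    (hK₂ : LipschitzOnWith K₂ (fderiv ℝ (fderiv ℝ F)) (closedBall xstar r))
    (hM₁ : ∀ w ∈ closedBall xstar r,
      IsUnit (fderiv ℝ F w) ∧ ‖Ring.inverse (fderiv ℝ F w)‖ ≤ M₁)
    (hM₂ : ∀ a ∈ closedBall xstar r, ∀ b ∈ closedBall xstar r,
      IsUnit (fderiv ℝ F a + fderiv ℝ F b) ∧ ‖Ring.inverse (fderiv ℝ F a + fderiv ℝ F b)‖ ≤ M₂)
    (hz : z ∈ closedBall xstar r) (hzM : M₁ * K₁ * ‖z - xstar‖ ≤ 1) :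
    IsUnit (fderiv ℝ F z) ∧ IsUnit (fderiv ℝ F z + fderiv ℝ F (newtonStep F z)) ∧
      ‖wfmStep F z - xstar‖ ≤ M₂ * (K₁ * M₁ * K₁ + K₂) * ‖z - xstar‖ ^ 3 := by
  obtain ⟨hJz, hJzM⟩ := hM₁ z hz
  have hnewton : ‖newtonStep F z - xstar‖ ≤ M₁ * K₁ * ‖z - xstar‖ ^ 2 :=
    calc ‖newtonStep F z - xstar‖ ≤ ‖Ring.inverse (fderiv ℝ F z)‖ * (K₁ * ‖z - xstar‖ ^ 2) :=
          norm_newtonStep_sub_le hroot (fun w hw => (hF w hw).differentiableAt two_ne_zero)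
            hK₁ hz hJz
      _ ≤ M₁ * K₁ * ‖z - xstar‖ ^ 2 := by rw [mul_assoc]; gcongr
  have hy : newtonStep F z ∈ closedBall xstar r := by
    rw [mem_closedBall, dist_eq_norm]
    calc ‖newtonStep F z - xstar‖ ≤ M₁ * K₁ * ‖z - xstar‖ * ‖z - xstar‖ := by
          rwa [mul_assoc _ ‖z - xstar‖, ← sq]
      _ ≤ 1 * ‖z - xstar‖ := by gcongr
      _ ≤ r := by rw [one_mul, ← dist_eq_norm]; exact hz
  obtain ⟨hA, hAM⟩ := hM₂ z hz _ hy
  have hM₂nonneg : 0 ≤ M₂ := (norm_nonneg _).trans hAM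
  refine ⟨hJz, hA, ?_⟩
  calc ‖wfmStep F z - xstar‖
      ≤ ‖Ring.inverse (fderiv ℝ F z + fderiv ℝ F (newtonStep F z))‖ *
          (K₁ * ‖newtonStep F z - xstar‖ * ‖z - xstar‖ + K₂ * ‖z - xstar‖ ^ 3) :=
        norm_wfmStep_sub_le hroot hF hK₁ hK₂ hz hy hA
    _ ≤ M₂ * (K₁ * (M₁ * K₁ * ‖z - xstar‖ ^ 2) * ‖z - xstar‖ + K₂ * ‖z - xstar‖ ^ 3) := by
        gcongr
    _ = M₂ * (K₁ * M₁ * K₁ + K₂) * ‖z - xstar‖ ^ 3 := by ring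

theorem eventually_wfmStep_cubic [CompleteSpace E] {s : Set E} (hs : s ∈ 𝓝 xstar)
    (hF : ContDiffOn ℝ 3 F s) (hroot : F xstar = 0) (hsimple : IsUnit (fderiv ℝ F xstar)) :
    ∃ C ≥ (0 : ℝ), ∀ᶠ z in 𝓝 xstar,
      IsUnit (fderiv ℝ F z) ∧ IsUnit (fderiv ℝ F z + fderiv ℝ F (newtonStep F z)) ∧
        ‖wfmStep F z - xstar‖ ≤ C * ‖z - xstar‖ ^ 3 := by
  have hF₃ : ContDiffAt ℝ 3 F xstar := hF.contDiffAt hs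
  have hJ : ContDiffAt ℝ 2 (fderiv ℝ F) xstar := hF₃.fderiv_right (by norm_num)
  obtain ⟨K₁, t₁, ht₁, hK₁⟩ := (hJ.of_le (by norm_num)).exists_lipschitzOnWith
  obtain ⟨K₂, t₂, ht₂, hK₂⟩ := (hJ.fderiv_right (by norm_num)).exists_lipschitzOnWith
  set M₁ := ‖Ring.inverse (fderiv ℝ F xstar)‖ + 1
  set M₂ := ‖Ring.inverse (fderiv ℝ F xstar + fderiv ℝ F xstar)‖ + 1
  have hM₁ : ∀ᶠ w in 𝓝 xstar, IsUnit (fderiv ℝ F w) ∧ ‖Ring.inverse (fderiv ℝ F w)‖ < M₁ :=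
    hJ.continuousAt.eventually hsimple.eventually_isUnit_and_norm_inverse_lt
  have hsum : IsUnit (fderiv ℝ F xstar + fderiv ℝ F xstar) := by
    simpa [two_smul] using hsimple.smul (Units.mk0 (2 : ℝ) two_ne_zero)
  have hM₂ : ∀ᶠ p in 𝓝 xstar ×ˢ 𝓝 xstar, IsUnit (fderiv ℝ F p.1 + fderiv ℝ F p.2) ∧
      ‖Ring.inverse (fderiv ℝ F p.1 + fderiv ℝ F p.2)‖ < M₂ := by
    have hcont : ContinuousAt (fun p : E × E => fderiv ℝ F p.1 + fderiv ℝ F p.2)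
        (xstar, xstar) :=
      (hJ.continuousAt.comp continuousAt_fst).add (hJ.continuousAt.comp continuousAt_snd)
    rw [← nhds_prod_eq]
    exact hcont.eventually hsum.eventually_isUnit_and_norm_inverse_lt
  obtain ⟨t₃, ht₃, hM₂t₃⟩ := eventually_prod_self_iff'.1 hM₂
  obtain ⟨r, hr, hB⟩ := nhds_basis_closedBall.eventually_iff.1
    ((hF₃.eventually (by simp)).and (Filter.Eventually.and (inter_mem (inter_mem ht₁ ht₂) ht₃) hM₁))
  refine ⟨M₂ * (K₁ * M₁ * K₁ + K₂), by positivity, ?_⟩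
  filter_upwards [ball_mem_nhds xstar hr,
    eventually_mul_norm_sub_pow_le xstar (M₁ * K₁) one_pos one_ne_zero] with z hz hzM
  rw [pow_one] at hzM
  exact wfmStep_cubic_of_closedBall hroot (fun w hw => (hB hw).1.of_le (by norm_num))
    (hK₁.mono fun w hw => (hB hw).2.1.1.1) (hK₂.mono fun w hw => (hB hw).2.1.1.2)
    (fun w hw => (hB hw).2.2.imp_right le_of_lt)
    (fun a ha b hb => (hM₂t₃ a (hB ha).2.1.2 b (hB hb).2.1.2).imp_right le_of_lt)
    (ball_subset_closedBall hz) hzM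

end WeerakoonFernando

/-- **Weerakoon–Fernando method for systems.** Let `F : ℝᵐ → ℝᵐ` be three times
continuously differentiable on a neighborhood of a point `x*` with `F x* = 0` and the
Jacobian `J x* = fderiv ℝ F x*` invertible. Then there are `δ > 0` and `C ≥ 0` such that
from any starting point `x₀` with `‖x₀ - x*‖ < δ`, the vector WFM iteration
`xλ_{n+1} = x_n - (J x_n)⁻¹ F x_n`,
`x_{n+1} = x_n - 2 (J x_n + J xλ_{n+1})⁻¹ F x_n`
is well defined (the relevant Jacobians and their sum are invertible at each step),
converges to `x*`, and satisfies `‖x_{n+1} - x*‖ ≤ C ‖x_n - x*‖³` for all `n`. -/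
theorem wfm_systems_cubic_convergence
    (m : ℕ) (F : EuclideanSpace ℝ (Fin m) → EuclideanSpace ℝ (Fin m))
    (xstar : EuclideanSpace ℝ (Fin m)) (s : Set (EuclideanSpace ℝ (Fin m)))
    (hs : s ∈ nhds xstar) (hF : ContDiffOn ℝ 3 F s)
    (hroot : F xstar = 0) (hsimple : IsUnit (fderiv ℝ F xstar)) :
    ∃ δ > 0, ∃ C ≥ (0 : ℝ), ∀ x₀ : EuclideanSpace ℝ (Fin m), ‖x₀ - xstar‖ < δ →
      ∀ x : ℕ → EuclideanSpace ℝ (Fin m), x 0 = x₀ →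
        (∀ n, x (n + 1) =
          x n - (2 : ℝ) • (Ring.inverse (fderiv ℝ F (x n) +
              fderiv ℝ F (x n - (Ring.inverse (fderiv ℝ F (x n))) (F (x n)))))
            (F (x n))) →
        (∀ n, IsUnit (fderiv ℝ F (x n)) ∧
            IsUnit (fderiv ℝ F (x n) +
              fderiv ℝ F (x n - (Ring.inverse (fderiv ℝ F (x n))) (F (x n))))) ∧
        Tendsto x atTop (nhds xstar) ∧
        (∀ n, ‖x (n + 1) - xstar‖ ≤ C * ‖x n - xstar‖ ^ 3) := by
  obtain ⟨C, hC, hstep⟩ := eventually_wfmStep_cubic hs hF hroot hsimple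
  obtain ⟨δ, hδ, hball⟩ := Metric.eventually_nhds_iff.1
    (hstep.and (eventually_mul_norm_sub_pow_le xstar C (by norm_num : (0 : ℝ) < 2⁻¹) two_ne_zero))
  simp_rw [dist_eq_norm] at hball
  have hcontr : ∀ z, ‖z - xstar‖ < δ → ‖wfmStep F z - xstar‖ ≤ 2⁻¹ * ‖z - xstar‖ := by
    intro z hz
    obtain ⟨⟨-, -, hcubic⟩, hsmall⟩ := hball hz
    calc ‖wfmStep F z - xstar‖ ≤ C * ‖z - xstar‖ ^ 2 * ‖z - xstar‖ := by rwa [mul_assoc, ← pow_succ]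
      _ ≤ 2⁻¹ * ‖z - xstar‖ := by gcongr
  refine ⟨δ, hδ, C, hC, fun x₀ hx₀ x hx0 hrec => ?_⟩
  subst hx0
  have hx := norm_sub_lt_of_contracting (by norm_num) hcontr hrec hx₀
  exact ⟨fun n => ⟨(hball (hx n)).1.1, (hball (hx n)).1.2.1⟩,
    tendsto_of_contracting (by norm_num) (by norm_num) hcontr hrec hx₀,
    fun n => hrec n ▸ (hball (hx n)).1.2.2⟩
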